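/- Let n ≥ 3 and define the reflection s(x,y) = (n·y − x, y) on ℤ². If (x,y) is a positive imaginary root (x,y ≥ 0, not both zero, x² + y² − n·x·y ≤ 0) with x > (n−1)·y, then s(x,y) is again a positive imaginary root with strictly smaller sum of coordinates: (n·y − x) + y < x + y. -/
import Mathlib


theorem stmt_12 (n : ℕ) (hn : 3 ≤ n) (x y : ℤ) (hx : 0 ≤ x) (hy : 0 ≤ y)
    (hne : ¬(x = 0 ∧ y = 0)) (him : x ^ 2 + y ^ 2 - n * x * y ≤ 0)
    (hbig : x > (n - 1) * y) :
    0 ≤ n * y - x ∧ 0 ≤ y ∧ ¬(n * y - x = 0 ∧ y = 0) ∧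
      (n * y - x) ^ 2 + y ^ 2 - n * (n * y - x) * y ≤ 0 ∧
      (n * y - x) + y < x + y := by
  have hn' : (3 : ℤ) ≤ (n : ℤ) := by exact_mod_cast hn
  have hxpos : 0 < x := by
    rcases lt_or_eq_of_le hx with h | h
    · exact h
    · exfalso; nlinarith
  refine ⟨by nlinarith, hy, ?_, by nlinarith, by nlinarith⟩
  rintro ⟨h1, h2⟩
  nlinarith
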